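/- For a TRS R with AC symbols, the many-step relations →R/AC* · ∼AC and →R^e,AC* · ∼AC coincide. Consequently, normal-form computation modulo AC can be performed with Peterson–Stickel rewriting over the extended system. -/

import Mathlib

/-- First-order terms over a signature `F` with natural-number variables. -/
inductive Tm (F : Type) : Type
  | var : Nat → Tm F
  | fn  : F → List (Tm F) → Tm F

namespace Tm

variable {F : Type}

mutual
def subst (σ : Nat → Tm F) : Tm F → Tm F
  | .var n => σ n
  | .fn f ts => .fn f (substList σ ts)
def substList (σ : Nat → Tm F) : List (Tm F) → List (Tm F)
  | [] => []
  | t :: ts => subst σ t :: substList σ ts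
end

mutual
def varsList : Tm F → List Nat
  | .var n => [n]
  | .fn _ ts => varsListL ts
def varsListL : List (Tm F) → List Nat
  | [] => []
  | t :: ts => varsList t ++ varsListL ts
end

/-- The set of variables of a term. -/
def vars (t : Tm F) : Set Nat := {n | n ∈ varsList t}

/-- A term is linear if no variable occurs more than once. -/
def Linear (t : Tm F) : Prop := (varsList t).Nodup

/-- The subterm at a given position (if the position exists). -/
def subtermAt : Tm F → List Nat → Option (Tm F)
  | t, [] => some t
  | .var _, _ :: _ => none
  | .fn _ ts, i :: p =>
    match ts[i]? with
    | some u => subtermAt u p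
    | none => none
  termination_by t p => p.length

/-- Replacement of the subterm at a given position. -/
def replaceAt : Tm F → List Nat → Tm F → Option (Tm F)
  | _, [], s => some s
  | .var _, _ :: _, _ => none
  | .fn f ts, i :: p, s =>
    match ts[i]? with
    | some u => (replaceAt u p s).map fun u' => .fn f (ts.set i u')
    | none => none
  termination_by t p _ => p.length

end Tm

open Tm

/-- A term rewrite system (or equational system): a set of pairs of terms. -/
abbrev TRS (F : Type) := Set (Tm F × Tm F)

/-- Well-formedness of the rules: left-hand sides are not variables and
variables of right-hand sides occur on the left. -/
def IsTRS {F : Type} (R : TRS F) : Prop :=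
  ∀ p ∈ R, (∀ n, p.1 ≠ .var n) ∧ vars p.2 ⊆ vars p.1

def LeftLinear {F : Type} (R : TRS F) : Prop := ∀ p ∈ R, Linear p.1

/-- One-step rewrite relation of a set of rules (closed under contexts and
substitutions). -/
def Rew {F : Type} (R : TRS F) (s t : Tm F) : Prop :=
  ∃ p l r σ, (l, r) ∈ R ∧ subtermAt s p = some (subst σ l) ∧
    replaceAt s p (subst σ r) = some t

/-- Normal forms. -/
def NF {A : Type} (r : A → A → Prop) (a : A) : Prop := ∀ b, ¬ r a b

/-- The equational theory `∼B` generated by an ES `B`. -/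
def simE {F : Type} (B : TRS F) : Tm F → Tm F → Prop :=
  Relation.EqvGen (Rew B)

/-- Rewriting modulo: `∼B · →R · ∼B`. -/
def RewMod {F : Type} (R B : TRS F) (s t : Tm F) : Prop :=
  ∃ s' t', simE B s s' ∧ Rew R s' t' ∧ simE B t' t

def Terminating {F : Type} (R : TRS F) : Prop :=
  WellFounded (fun a b => Rew R b a)

def TerminatingMod {F : Type} (R B : TRS F) : Prop :=
  WellFounded (fun a b => RewMod R B b a)

/-- Conversion modulo `B`: arbitrary sequences of `→R`, `←R` and `∼B` steps. -/
def ConvMod {F : Type} (R B : TRS F) : Tm F → Tm F → Prop :=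
  Relation.ReflTransGen (fun a b => Rew R a b ∨ Rew R b a ∨ simE B a b)

/-- Joinability modulo `B` using the plain rewrite relation:
`→R* · ∼B · ←R*`. -/
def JoinMod {F : Type} (R B : TRS F) (s t : Tm F) : Prop :=
  ∃ u v, Relation.ReflTransGen (Rew R) s u ∧ simE B u v ∧
    Relation.ReflTransGen (Rew R) t v

def ChurchRosserMod {F : Type} (R B : TRS F) : Prop :=
  ∀ s t, ConvMod R B s t → JoinMod R B s t

def Joinable {F : Type} (R : TRS F) (s t : Tm F) : Prop :=
  ∃ v, Relation.ReflTransGen (Rew R) s v ∧ Relation.ReflTransGen (Rew R) t v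

def Confluent {F : Type} (R : TRS F) : Prop :=
  ∀ s t u, Relation.ReflTransGen (Rew R) s t → Relation.ReflTransGen (Rew R) s u →
    Joinable R t u

/-- Renaming a term by a bijection on variables. -/
def rename {F : Type} (ρ : Nat ≃ Nat) (t : Tm F) : Tm F :=
  subst (fun n => .var (ρ n)) t

def VariantTm {F : Type} (s t : Tm F) : Prop := ∃ ρ : Nat ≃ Nat, rename ρ s = t

def VariantRule {F : Type} (p q : Tm F × Tm F) : Prop :=
  ∃ ρ : Nat ≃ Nat, rename ρ p.1 = q.1 ∧ rename ρ p.2 = q.2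

def Unifies {F : Type} (σ : Nat → Tm F) (s t : Tm F) : Prop := subst σ s = subst σ t

/-- Most general unifier. -/
def IsMGU {F : Type} (σ : Nat → Tm F) (s t : Tm F) : Prop :=
  Unifies σ s t ∧ ∀ τ, Unifies τ s t → ∃ δ, ∀ n, τ n = subst δ (σ n)

/-- `CriticalPeak R₁ R₂ t p s u` : `t ←R₁[p] s →R₂[ε] u` is a critical peak
obtained from an overlap of variable-disjoint variants of rules of `R₁`
(inner rule) and `R₂` (root rule). -/
def CriticalPeak {F : Type} (R₁ R₂ : TRS F) (t : Tm F) (p : List Nat) (s u : Tm F) :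
    Prop :=
  ∃ l₁ r₁ l₂ r₂ σ,
    (∃ q ∈ R₁, VariantRule q (l₁, r₁)) ∧
    (∃ q ∈ R₂, VariantRule q (l₂, r₂)) ∧
    (vars l₁ ∪ vars r₁) ∩ (vars l₂ ∪ vars r₂) = ∅ ∧
    (∃ f ts, subtermAt l₂ p = some (.fn f ts) ∧ IsMGU σ l₁ (.fn f ts)) ∧
    (p = [] → ¬ VariantRule (l₁, r₁) (l₂, r₂)) ∧
    s = subst σ l₂ ∧
    replaceAt s p (subst σ r₁) = some t ∧
    u = subst σ r₂

/-- The set of critical pairs between `R₁` and `R₂`. -/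
def CP {F : Type} (R₁ R₂ : TRS F) : Set (Tm F × Tm F) :=
  {tu | ∃ p s, CriticalPeak R₁ R₂ tu.1 p s tu.2}

/-- A critical peak `t ←[p] s →[ε] u` is prime (w.r.t. `R`) if all proper
subterms of `s|p` are in normal form w.r.t. `→R`. -/
def PrimeAt {F : Type} (R : TRS F) (s : Tm F) (p : List Nat) : Prop :=
  ∀ q v, q ≠ [] → subtermAt s (p ++ q) = some v → NF (Rew R) v

/-- Prime critical pairs of a TRS. -/
def PCP {F : Type} (R : TRS F) : Set (Tm F × Tm F) :=
  {tu | ∃ p s, CriticalPeak R R tu.1 p s tu.2 ∧ PrimeAt R s p}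

/-- `E ∪ E⁻¹`. -/
def sympm {F : Type} (E : TRS F) : TRS F :=
  E ∪ {q | ∃ p ∈ E, q = (p.2, p.1)}

/-- Prime critical pairs between `R` and `B^±` (in both directions), where
primality is always checked with respect to `→R`. -/
def PCPpm {F : Type} (R B : TRS F) : Set (Tm F × Tm F) :=
  {tu | ∃ p s, (CriticalPeak R (sympm B) tu.1 p s tu.2 ∨
                CriticalPeak (sympm B) R tu.1 p s tu.2) ∧ PrimeAt R s p}

/-- The associativity and commutativity axioms for the symbols in `Ac`,
oriented left-to-right. -/
def ACax {F : Type} (Ac : Set F) : TRS F :=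
  {q | ∃ f ∈ Ac,
    q = (Tm.fn f [Tm.fn f [Tm.var 0, Tm.var 1], Tm.var 2],
         Tm.fn f [Tm.var 0, Tm.fn f [Tm.var 1, Tm.var 2]]) ∨
    q = (Tm.fn f [Tm.var 0, Tm.var 1], Tm.fn f [Tm.var 1, Tm.var 0])}

/-- AC equivalence of terms. -/
def simAC {F : Type} (Ac : Set F) : Tm F → Tm F → Prop := simE (ACax Ac)

/-- Peterson–Stickel rewriting: rewriting with AC matching at the redex. -/
def RewPS {F : Type} (Ac : Set F) (R : TRS F) (s t : Tm F) : Prop :=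
  ∃ p l r σ w, (l, r) ∈ R ∧ subtermAt s p = some w ∧ simAC Ac w (subst σ l) ∧
    replaceAt s p (subst σ r) = some t

/-- The extended system `R^e`: `R` together with all extensions
`f(f(u,v),x) → f(r,x)` of rules `f(u,v) → r` with `f` an AC symbol
and `x` a fresh variable. -/
def ACExt {F : Type} (Ac : Set F) (R : TRS F) : TRS F :=
  R ∪ {q | ∃ f ∈ Ac, ∃ u v r x, (Tm.fn f [u, v], r) ∈ R ∧
        x ∉ vars (Tm.fn f [u, v]) ∧ x ∉ vars r ∧
        q = (Tm.fn f [Tm.fn f [u, v], Tm.var x], Tm.fn f [r, Tm.var x])}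

namespace StmtAux

open Tm

variable {F : Type}

/-! ### basic subst / vars lemmas -/

theorem substList_eq_map (σ : Nat → Tm F) : ∀ ts : List (Tm F),
    substList σ ts = ts.map (subst σ)
  | [] => rfl
  | t :: ts => by simp [substList, substList_eq_map σ ts]

@[simp] theorem subst_fn (σ : Nat → Tm F) (f : F) (ts : List (Tm F)) :
    subst σ (.fn f ts) = .fn f (ts.map (subst σ)) := by
  simp [subst, substList_eq_map]

@[simp] theorem subst_var (σ : Nat → Tm F) (n : Nat) :
    subst σ (.var n) = σ n := rfl

theorem varsListL_eq (ts : List (Tm F)) :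
    varsListL ts = ts.flatMap varsList := by
  induction ts with
  | nil => rfl
  | cons t ts ih => simp [varsListL, ih]

mutual
theorem subst_congr (σ τ : Nat → Tm F) : ∀ t : Tm F,
    (∀ n ∈ varsList t, σ n = τ n) → subst σ t = subst τ t
  | .var n, h => h n (by simp [varsList])
  | .fn f ts, h => by
      simp only [subst]
      rw [substList_congr σ τ ts (fun n hn => h n (by simpa [varsList, varsListL_eq] using hn))]
theorem substList_congr (σ τ : Nat → Tm F) : ∀ ts : List (Tm F),
    (∀ n ∈ varsListL ts, σ n = τ n) → substList σ ts = substList τ ts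
  | [], _ => rfl
  | t :: ts, h => by
      simp only [substList]
      rw [subst_congr σ τ t (fun n hn => h n (by simp [varsListL, hn])),
        substList_congr σ τ ts (fun n hn => h n (by simp [varsListL, hn]))]
end

theorem exists_fresh (L : List Nat) : ∃ x : Nat, x ∉ L := by
  classical
  obtain ⟨x, hx⟩ := Infinite.exists_notMem_finset L.toFinset
  exact ⟨x, by simpa using hx⟩

/-! ### position lemmas -/

@[simp] theorem subtermAt_nil (t : Tm F) : subtermAt t [] = some t := by
  rw [subtermAt]

@[simp] theorem replaceAt_nil (t s : Tm F) : replaceAt t [] s = some s := by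
  rw [replaceAt]

@[simp] theorem subtermAt_var_cons (n i : Nat) (p : List Nat) :
    subtermAt (Tm.var n : Tm F) (i :: p) = none := by
  rw [subtermAt]

@[simp] theorem replaceAt_var_cons (n i : Nat) (p : List Nat) (s : Tm F) :
    replaceAt (Tm.var n : Tm F) (i :: p) s = none := by
  rw [replaceAt]

theorem subtermAt_fn_cons (f : F) (ts : List (Tm F)) (i : Nat) (p : List Nat) :
    subtermAt (Tm.fn f ts) (i :: p) = ts[i]?.bind (fun u => subtermAt u p) := by
  rw [subtermAt]
  cases ts[i]? <;> simp

theorem replaceAt_fn_cons (f : F) (ts : List (Tm F)) (i : Nat) (p : List Nat) (s : Tm F) :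
    replaceAt (Tm.fn f ts) (i :: p) s =
      ts[i]?.bind (fun u => (replaceAt u p s).map fun u' => .fn f (ts.set i u')) := by
  rw [replaceAt]
  cases ts[i]? <;> simp

theorem subtermAt_append : ∀ (p q : List Nat) (t : Tm F),
    subtermAt t (p ++ q) = (subtermAt t p).bind (fun u => subtermAt u q)
  | [], q, t => by simp
  | i :: p, q, t => by
    cases t with
    | var n => simp
    | fn f ts =>
      rw [List.cons_append, subtermAt_fn_cons, subtermAt_fn_cons]
      cases ts[i]? with
      | none => rfl
      | some u => simpa using subtermAt_append p q u

theorem replaceAt_isSome : ∀ (p : List Nat) (t s : Tm F),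
    (replaceAt t p s).isSome = (subtermAt t p).isSome
  | [], t, s => by simp
  | i :: p, t, s => by
    cases t with
    | var n => simp
    | fn f ts =>
      rw [subtermAt_fn_cons, replaceAt_fn_cons]
      cases ts[i]? with
      | none => rfl
      | some u => simpa using replaceAt_isSome p u s

theorem replaceAt_exists {p : List Nat} {t u : Tm F} (h : subtermAt t p = some u)
    (s : Tm F) : ∃ t', replaceAt t p s = some t' := by
  have h2 := replaceAt_isSome p t s
  rw [h] at h2
  exact Option.isSome_iff_exists.mp (by rw [h2]; rfl)

theorem subtermAt_exists {p : List Nat} {t t' s : Tm F} (h : replaceAt t p s = some t') :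
    ∃ u, subtermAt t p = some u := by
  have h2 := replaceAt_isSome p t s
  rw [h] at h2
  exact Option.isSome_iff_exists.mp (by rw [← h2]; rfl)

theorem subtermAt_replaceAt : ∀ (p : List Nat) {t t' s : Tm F},
    replaceAt t p s = some t' → subtermAt t' p = some s
  | [], t, t', s => by simp +contextual [eq_comm]
  | i :: p, t, t', s => by
    cases t with
    | var n => simp
    | fn f ts =>
      rw [replaceAt_fn_cons]
      cases hts : ts[i]? with
      | none => simp
      | some u =>
        simp only [Option.bind_some]
        intro h
        cases hru : replaceAt u p s with
        | none => rw [hru] at h; simp at h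
        | some u' =>
          rw [hru] at h
          simp only [Option.map_some, Option.some_inj] at h
          subst h
          rw [subtermAt_fn_cons]
          have hi : i < ts.length := (List.getElem?_eq_some_iff.mp hts).1
          rw [List.getElem?_set_self (by simpa using hi)]
          simpa using subtermAt_replaceAt p hru

theorem replaceAt_self : ∀ (p : List Nat) {t u : Tm F},
    subtermAt t p = some u → replaceAt t p u = some t
  | [], t, u => by simp +contextual [eq_comm]
  | i :: p, t, u => by
    cases t with
    | var n => simp
    | fn f ts =>
      rw [subtermAt_fn_cons, replaceAt_fn_cons]
      cases hts : ts[i]? with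
      | none => simp
      | some w =>
        simp only [Option.bind_some]
        intro h
        rw [replaceAt_self p h]
        have : ts.set i w = ts := by
          apply List.ext_getElem?
          intro j
          rcases eq_or_ne j i with rfl | hj
          · rw [List.getElem?_set_self (by simpa using (List.getElem?_eq_some_iff.mp hts).1)]
            exact hts.symm
          · rw [List.getElem?_set_ne hj.symm]
        simp [this]

theorem replaceAt_replaceAt : ∀ (p : List Nat) {t t₁ : Tm F} {u : Tm F},
    replaceAt t p u = some t₁ → ∀ v, replaceAt t₁ p v = replaceAt t p v
  | [], t, t₁, u => by simp
  | i :: p, t, t₁, u => by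
    cases t with
    | var n => simp
    | fn f ts =>
      rw [replaceAt_fn_cons]
      cases hts : ts[i]? with
      | none => simp
      | some w =>
        simp only [Option.bind_some]
        intro h v
        cases hru : replaceAt w p u with
        | none => rw [hru] at h; simp at h
        | some w' =>
          rw [hru] at h
          simp only [Option.map_some, Option.some_inj] at h
          subst h
          rw [replaceAt_fn_cons, replaceAt_fn_cons]
          have hi : i < ts.length := (List.getElem?_eq_some_iff.mp hts).1
          rw [List.getElem?_set_self (by simpa using hi), hts]
          simp only [Option.bind_some]
          rw [replaceAt_replaceAt p hru v]
          cases replaceAt w p v with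
          | none => rfl
          | some w'' => simp [List.set_set]

theorem replaceAt_append : ∀ (p : List Nat) (q : List Nat) {t u : Tm F},
    subtermAt t p = some u → ∀ s, replaceAt t (p ++ q) s =
      (replaceAt u q s).bind (fun u' => replaceAt t p u')
  | [], q, t, u => by
    intro h s
    simp at h
    subst h
    simp only [List.nil_append]
    cases h : replaceAt t q s <;> simp [h]
  | i :: p, q, t, u => by
    cases t with
    | var n => simp
    | fn f ts =>
      rw [subtermAt_fn_cons]
      cases hts : ts[i]? with
      | none => simp
      | some w =>
        simp only [Option.bind_some]
        intro h s
        rw [List.cons_append, replaceAt_fn_cons, hts]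
        simp only [Option.bind_some]
        rw [replaceAt_append p q h s]
        cases replaceAt u q s with
        | none => simp
        | some u' =>
          simp only [Option.bind_some]
          rw [replaceAt_fn_cons, hts]
          simp

end StmtAux
namespace StmtAux
open Tm
variable {F : Type}

/-! ### lifting and decomposing rewrite steps -/

theorem Rew_at {X : TRS F} {s u u' s' : Tm F} {p : List Nat}
    (hs : subtermAt s p = some u) (h : Rew X u u')
    (hr : replaceAt s p u' = some s') : Rew X s s' := by
  obtain ⟨q, l, r, σ, hlr, h1, h2⟩ := h
  refine ⟨p ++ q, l, r, σ, hlr, ?_, ?_⟩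
  · rw [subtermAt_append, hs]; simpa using h1
  · rw [replaceAt_append p q hs, h2]; simpa using hr

theorem simE_refl {B : TRS F} (t : Tm F) : simE B t t := Relation.EqvGen.refl t
theorem simE_symm {B : TRS F} {s t : Tm F} (h : simE B s t) : simE B t s := h.symm
theorem simE_trans {B : TRS F} {s t u : Tm F} (h : simE B s t) (h' : simE B t u) :
    simE B s u := h.trans _ _ _ h'
theorem simE_of_rew {B : TRS F} {s t : Tm F} (h : Rew B s t) : simE B s t :=
  Relation.EqvGen.rel _ _ h

/-- Congruence: `simE` is closed under contexts. -/
theorem simE_replace {B : TRS F} {u u' : Tm F} (h : simE B u u') :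
    ∀ {c : Tm F} {p : List Nat} {d d' : Tm F},
      replaceAt c p u = some d → replaceAt c p u' = some d' → simE B d d' := by
  induction h with
  | rel a b hab =>
    intro c p d d' h1 h2
    have hd : subtermAt d p = some a := subtermAt_replaceAt p h1
    have := replaceAt_replaceAt p h1 b
    rw [h2] at this
    exact simE_of_rew (Rew_at hd hab this)
  | refl a =>
    intro c p d d' h1 h2
    rw [h1] at h2
    exact (Option.some_inj.mp h2) ▸ simE_refl d
  | symm a b _ ih =>
    intro c p d d' h1 h2
    exact simE_symm (ih h2 h1)
  | trans a b e _ _ ih1 ih2 =>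
    intro c p d d' h1 h2
    obtain ⟨u, hu⟩ := subtermAt_exists h1
    obtain ⟨m, hm⟩ := replaceAt_exists hu b
    exact simE_trans (ih1 h1 hm) (ih2 hm h2)

@[simp] theorem replaceAt_fn2_zero (f : F) (a b x : Tm F) :
    replaceAt (Tm.fn f [a, b]) [0] x = some (Tm.fn f [x, b]) := by
  rw [replaceAt_fn_cons]; simp

@[simp] theorem replaceAt_fn2_one (f : F) (a b x : Tm F) :
    replaceAt (Tm.fn f [a, b]) [1] x = some (Tm.fn f [a, x]) := by
  rw [replaceAt_fn_cons]; simp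

@[simp] theorem subtermAt_fn2_zero (f : F) (a b : Tm F) :
    subtermAt (Tm.fn f [a, b]) [0] = some a := by
  rw [subtermAt_fn_cons]; simp

@[simp] theorem subtermAt_fn2_one (f : F) (a b : Tm F) :
    subtermAt (Tm.fn f [a, b]) [1] = some b := by
  rw [subtermAt_fn_cons]; simp

theorem simE_fn2 {B : TRS F} {u u' v v' : Tm F} (f : F)
    (h1 : simE B u u') (h2 : simE B v v') :
    simE B (Tm.fn f [u, v]) (Tm.fn f [u', v']) :=
  simE_trans
    (simE_replace h1 (replaceAt_fn2_zero f u v u) (replaceAt_fn2_zero f u v u'))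
    (simE_replace h2 (replaceAt_fn2_one f u' v v) (replaceAt_fn2_one f u' v v'))

/-! ### AC steps -/

def σ3 (X Y Z : Tm F) : Nat → Tm F
  | 0 => X
  | 1 => Y
  | _ => Z

@[simp] theorem σ3_zero (X Y Z : Tm F) : σ3 X Y Z 0 = X := rfl
@[simp] theorem σ3_one (X Y Z : Tm F) : σ3 X Y Z 1 = Y := rfl
@[simp] theorem σ3_two (X Y Z : Tm F) : σ3 X Y Z 2 = Z := rfl

theorem assoc_mem {Ac : Set F} {f : F} (hf : f ∈ Ac) :
    ((Tm.fn f [Tm.fn f [Tm.var 0, Tm.var 1], Tm.var 2],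
      Tm.fn f [Tm.var 0, Tm.fn f [Tm.var 1, Tm.var 2]]) : Tm F × Tm F) ∈ ACax Ac :=
  ⟨f, hf, Or.inl rfl⟩

theorem comm_mem {Ac : Set F} {f : F} (hf : f ∈ Ac) :
    ((Tm.fn f [Tm.var 0, Tm.var 1], Tm.fn f [Tm.var 1, Tm.var 0]) : Tm F × Tm F) ∈ ACax Ac :=
  ⟨f, hf, Or.inr rfl⟩

theorem rew_assoc {Ac : Set F} {f : F} (hf : f ∈ Ac) (X Y Z : Tm F) :
    Rew (ACax Ac) (Tm.fn f [Tm.fn f [X, Y], Z]) (Tm.fn f [X, Tm.fn f [Y, Z]]) :=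
  ⟨[], _, _, σ3 X Y Z, assoc_mem hf, by simp, by simp⟩

theorem rew_comm {Ac : Set F} {f : F} (hf : f ∈ Ac) (X Y : Tm F) :
    Rew (ACax Ac) (Tm.fn f [X, Y]) (Tm.fn f [Y, X]) :=
  ⟨[], _, _, σ3 X Y X, comm_mem hf, by simp, by simp⟩

theorem sim_assoc {Ac : Set F} {f : F} (hf : f ∈ Ac) (X Y Z : Tm F) :
    simAC Ac (Tm.fn f [Tm.fn f [X, Y], Z]) (Tm.fn f [X, Tm.fn f [Y, Z]]) :=
  simE_of_rew (rew_assoc hf X Y Z)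

theorem sim_comm {Ac : Set F} {f : F} (hf : f ∈ Ac) (X Y : Tm F) :
    simAC Ac (Tm.fn f [X, Y]) (Tm.fn f [Y, X]) :=
  simE_of_rew (rew_comm hf X Y)

/-! ### shape preservation -/

def shape : Tm F → Sum Nat (F × Nat)
  | .var n => Sum.inl n
  | .fn f ts => Sum.inr (f, ts.length)

theorem shape_rew {Ac : Set F} {a b : Tm F} (h : Rew (ACax Ac) a b) :
    shape a = shape b := by
  obtain ⟨p, l, r, σ, hlr, h1, h2⟩ := h
  obtain ⟨f, hf, hcase⟩ := hlr
  cases p with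
  | nil =>
    simp at h1 h2
    subst h1; subst h2
    rcases hcase with h | h <;>
      · have hl := congrArg Prod.fst h
        have hr := congrArg Prod.snd h
        simp at hl hr
        subst hl; subst hr
        simp [shape]
  | cons i p =>
    cases a with
    | var n => simp at h1
    | fn g ts =>
      rw [replaceAt_fn_cons] at h2
      cases hts : ts[i]? with
      | none => rw [hts] at h2; simp at h2
      | some u =>
        rw [hts] at h2
        simp only [Option.bind_some] at h2
        cases hru : replaceAt u p (subst σ r) with
        | none => rw [hru] at h2; simp at h2
        | some u' =>
          rw [hru] at h2
          simp only [Option.map_some, Option.some_inj] at h2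
          subst h2
          simp [shape]

theorem shape_sim {Ac : Set F} {a b : Tm F} (h : simAC Ac a b) : shape a = shape b := by
  induction h with
  | rel a b hab => exact shape_rew hab
  | refl a => rfl
  | symm a b _ ih => exact ih.symm
  | trans a b c _ _ ih1 ih2 => exact ih1.trans ih2

/-! ### position trichotomy -/

theorem pos_trichotomy : ∀ p q : List Nat,
    (∃ e, q = p ++ e) ∨ (∃ e, e ≠ [] ∧ p = q ++ e) ∨
    (∃ c i j p' q', i ≠ j ∧ p = c ++ i :: p' ∧ q = c ++ j :: q')
  | [], q => Or.inl ⟨q, rfl⟩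
  | i :: p, [] => Or.inr (Or.inl ⟨i :: p, by simp, rfl⟩)
  | i :: p, j :: q => by
    rcases eq_or_ne i j with rfl | hij
    · rcases pos_trichotomy p q with ⟨e, rfl⟩ | ⟨e, he, rfl⟩ | ⟨c, a, b, p', q', hab, rfl, rfl⟩
      · exact Or.inl ⟨e, rfl⟩
      · exact Or.inr (Or.inl ⟨e, he, rfl⟩)
      · exact Or.inr (Or.inr ⟨i :: c, a, b, p', q', hab, rfl, rfl⟩)
    · exact Or.inr (Or.inr ⟨[], i, j, p, q, hij, rfl, rfl⟩)

/-! ### disjoint positions -/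

theorem replace_decomp {t : Tm F} {c : List Nat} {i : Nat} {p : List Nat} {x t₁ : Tm F}
    (h : replaceAt t (c ++ i :: p) x = some t₁) :
    ∃ f ts w w', subtermAt t c = some (Tm.fn f ts) ∧ ts[i]? = some w ∧
      replaceAt w p x = some w' ∧ replaceAt t c (Tm.fn f (ts.set i w')) = some t₁ := by
  obtain ⟨u, hu⟩ := subtermAt_exists h
  rw [subtermAt_append] at hu
  cases hc : subtermAt t c with
  | none => rw [hc] at hu; simp at hu
  | some n =>
    rw [hc] at hu
    simp only [Option.bind_some] at hu
    cases n with
    | var m => simp at hu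
    | fn f ts =>
      rw [subtermAt_fn_cons] at hu
      cases hts : ts[i]? with
      | none => rw [hts] at hu; simp at hu
      | some w =>
        rw [replaceAt_append c (i :: p) hc x] at h
        rw [replaceAt_fn_cons, hts] at h
        simp only [Option.bind_some] at h
        cases hrw : replaceAt w p x with
        | none => rw [hrw] at h; simp at h
        | some w' =>
          rw [hrw] at h
          simp only [Option.map_some, Option.bind_some] at h
          exact ⟨f, ts, w, w', rfl, hts, hrw, h⟩

theorem disjoint_subtermAt {t t₁ x : Tm F} {c : List Nat} {i j : Nat} {p q : List Nat}
    (hij : i ≠ j) (h : replaceAt t (c ++ i :: p) x = some t₁) :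
    subtermAt t₁ (c ++ j :: q) = subtermAt t (c ++ j :: q) := by
  obtain ⟨f, ts, w, w', hc, hts, hrw, hrep⟩ := replace_decomp h
  have hc₁ : subtermAt t₁ c = some (Tm.fn f (ts.set i w')) := subtermAt_replaceAt c hrep
  rw [subtermAt_append, subtermAt_append, hc, hc₁]
  simp only [Option.bind_some]
  rw [subtermAt_fn_cons, subtermAt_fn_cons, List.getElem?_set_ne hij]

theorem disjoint_replace_comm {t t₁ t₂ t₃ x y : Tm F} {c : List Nat} {i j : Nat}
    {p q : List Nat} (hij : i ≠ j)
    (h1 : replaceAt t (c ++ i :: p) x = some t₁)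
    (h2 : replaceAt t₁ (c ++ j :: q) y = some t₂)
    (h3 : replaceAt t (c ++ j :: q) y = some t₃) :
    replaceAt t₃ (c ++ i :: p) x = some t₂ := by
  obtain ⟨f, ts, w, w', hc, hts, hrw, hrep⟩ := replace_decomp h1
  obtain ⟨f', ts', v, v', hc', hts', hrv, hrep'⟩ := replace_decomp h2
  obtain ⟨f'', ts'', v₂, v₂', hc'', hts'', hrv₂, hrep''⟩ := replace_decomp h3
  -- identify the decompositions
  have hc₁ : subtermAt t₁ c = some (Tm.fn f (ts.set i w')) := subtermAt_replaceAt c hrep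
  have e1 : (Tm.fn f (ts.set i w') : Tm F) = Tm.fn f' ts' :=
    Option.some_inj.mp (hc₁.symm.trans hc')
  injection e1 with hf1 hts1
  subst hf1; subst hts1
  have e2 : (Tm.fn f ts : Tm F) = Tm.fn f'' ts'' :=
    Option.some_inj.mp (hc.symm.trans hc'')
  injection e2 with hf2 hts2
  subst hf2; subst hts2
  rw [List.getElem?_set_ne hij, hts''] at hts'
  obtain rfl : v₂ = v := by simpa using hts'
  rw [hrv] at hrv₂
  obtain rfl : v' = v₂' := by simpa using hrv₂
  -- now compute
  have hc₃ : subtermAt t₃ c = some (Tm.fn f (ts.set j v')) := subtermAt_replaceAt c hrep''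
  rw [replaceAt_append c (i :: p) hc₃ x, replaceAt_fn_cons,
    List.getElem?_set_ne (Ne.symm hij), hts]
  simp only [Option.bind_some, hrw, Option.map_some, Option.bind_some]
  rw [List.set_comm _ _ (Ne.symm hij)]
  rw [replaceAt_replaceAt c hrep'']
  -- t₂ : from hrep' : replaceAt t₁ c (fn f ((ts.set i w').set j v')) = some t₂
  rw [replaceAt_replaceAt c hrep] at hrep'
  exact hrep'

end StmtAux
namespace StmtAux
open Tm
variable {F : Type}

/-! ### symmetrized AC step -/

def SStep (Ac : Set F) (a b : Tm F) : Prop :=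
  ∃ q l r σ, ((l, r) ∈ ACax Ac ∨ (r, l) ∈ ACax Ac) ∧
    subtermAt a q = some (subst σ l) ∧ replaceAt a q (subst σ r) = some b

theorem SStep_of_rew {Ac : Set F} {a b : Tm F} (h : Rew (ACax Ac) a b) : SStep Ac a b := by
  obtain ⟨q, l, r, σ, hlr, h1, h2⟩ := h
  exact ⟨q, l, r, σ, Or.inl hlr, h1, h2⟩

theorem SStep.symm {Ac : Set F} {a b : Tm F} (h : SStep Ac a b) : SStep Ac b a := by
  obtain ⟨q, l, r, σ, hlr, h1, h2⟩ := h
  refine ⟨q, r, l, σ, hlr.symm, subtermAt_replaceAt q h2, ?_⟩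
  rw [replaceAt_replaceAt q h2]
  exact replaceAt_self q h1

theorem SStep.sim {Ac : Set F} {a b : Tm F} (h : SStep Ac a b) : simAC Ac a b := by
  obtain ⟨q, l, r, σ, hlr, h1, h2⟩ := h
  rcases hlr with hlr | hlr
  · exact simE_of_rew ⟨q, l, r, σ, hlr, h1, h2⟩
  · refine simE_symm (simE_of_rew ⟨q, r, l, σ, hlr, subtermAt_replaceAt q h2, ?_⟩)
    rw [replaceAt_replaceAt q h2]
    exact replaceAt_self q h1

/-! ### shapes of rule left-hand sides -/

theorem lhs_not_var {Ac : Set F} {R : TRS F} (hTRS : IsTRS R) {l' r' : Tm F}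
    (hmem : (l', r') ∈ ACExt Ac R) (n : Nat) : l' ≠ .var n := by
  rcases hmem with hmem | ⟨f, hf, u, v, r, x, hR, hx1, hx2, heq⟩
  · exact (hTRS _ hmem).1 n
  · have : l' = Tm.fn f [Tm.fn f [u, v], Tm.var x] := congrArg Prod.fst heq
    simp [this]

theorem lhs_shape {Ac : Set F} {R : TRS F} (hTRS : IsTRS R) {l' r' : Tm F}
    (hmem : (l', r') ∈ ACExt Ac R) {σ' : Nat → Tm F} {f : F}
    (hsh : shape (subst σ' l') = Sum.inr (f, 2)) :
    ∃ l1 l2, l' = .fn f [l1, l2] := by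
  cases l' with
  | var n => exact absurd rfl (lhs_not_var hTRS hmem n)
  | fn g ls =>
    rw [subst_fn] at hsh
    simp only [shape, List.length_map] at hsh
    injection hsh with hsh
    have h1 : g = f := congrArg Prod.fst hsh
    have h2 : ls.length = 2 := congrArg Prod.snd hsh
    subst h1
    obtain ⟨l1, l2, rfl⟩ := List.length_eq_two.mp h2
    exact ⟨l1, l2, rfl⟩

/-! ### freshness -/

theorem mem_vars_iff {t : Tm F} {n : Nat} : n ∈ vars t ↔ n ∈ varsList t := Iff.rfl

theorem subst_update_fresh {σ' : Nat → Tm F} {x : Nat} {X : Tm F} {t : Tm F}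
    (hx : x ∉ varsList t) :
    subst (fun n => if n = x then X else σ' n) t = subst σ' t := by
  apply subst_congr
  intro n hn
  have : n ≠ x := fun h => hx (h ▸ hn)
  simp [this]

/-! ### the extension lemma -/

theorem ext_lemma {Ac : Set F} {R : TRS F} (hTRS : IsTRS R) {l' r' : Tm F}
    (hmem : (l', r') ∈ ACExt Ac R) {f : F} (hf : f ∈ Ac) {l1 l2 : Tm F}
    (hl' : l' = .fn f [l1, l2]) (σ' : Nat → Tm F) (X : Tm F) :
    ∃ L Rr τ, (L, Rr) ∈ ACExt Ac R ∧
      simAC Ac (subst τ L) (.fn f [subst σ' l', X]) ∧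
      simAC Ac (subst τ Rr) (.fn f [subst σ' r', X]) := by
  rcases hmem with hmem | ⟨f₀, hf₀, u, v, r₀, x₀, hR, hx1, hx2, heq⟩
  · -- base rule: use its extension with a fresh variable
    obtain ⟨x, hx⟩ := exists_fresh (varsList l' ++ varsList r')
    have hxl : x ∉ varsList l' := fun h => hx (List.mem_append.mpr (Or.inl h))
    have hxr : x ∉ varsList r' := fun h => hx (List.mem_append.mpr (Or.inr h))
    set τ : Nat → Tm F := fun n => if n = x then X else σ' n with hτ
    refine ⟨.fn f [l', .var x], .fn f [r', .var x], τ, ?_, ?_, ?_⟩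
    · refine Or.inr ⟨f, hf, l1, l2, r', x, hl' ▸ hmem, ?_, ?_, by rw [hl']⟩
      · rw [← hl']; exact hxl
      · exact hxr
    · rw [subst_fn]
      simp only [List.map, subst_var]
      rw [subst_update_fresh hxl]
      simp [hτ]
      exact simE_refl _
    · rw [subst_fn]
      simp only [List.map, subst_var]
      rw [subst_update_fresh hxr]
      simp [hτ]
      exact simE_refl _
  · -- extension rule: reuse it, absorbing X into the extension variable
    have hl : l' = Tm.fn f₀ [Tm.fn f₀ [u, v], Tm.var x₀] := congrArg Prod.fst heq
    have hr : r' = Tm.fn f₀ [r₀, Tm.var x₀] := congrArg Prod.snd heq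
    have hf₀f : f₀ = f := by
      have h : Tm.fn f₀ [Tm.fn f₀ [u, v], Tm.var x₀] = Tm.fn f [l1, l2] := hl.symm.trans hl'
      injection h with h1 h2
    subst hf₀f
    have hx1' : x₀ ∉ varsList (Tm.fn f₀ [u, v]) := hx1
    have hx2' : x₀ ∉ varsList r₀ := hx2
    set τ : Nat → Tm F := fun n => if n = x₀ then Tm.fn f₀ [σ' x₀, X] else σ' n with hτ
    refine ⟨l', r', τ, Or.inr ⟨f₀, hf₀, u, v, r₀, x₀, hR, hx1, hx2, heq⟩, ?_, ?_⟩
    · rw [hl, subst_fn, subst_fn]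
      simp only [List.map, subst_var]
      rw [subst_update_fresh hx1']
      have hτx : τ x₀ = Tm.fn f₀ [σ' x₀, X] := by simp [hτ]
      rw [hτx]
      exact simE_symm (sim_assoc hf₀ (subst σ' (Tm.fn f₀ [u, v])) (σ' x₀) X)
  -- goal: fn f₀ [subst σ' (fn f₀ [u,v]), fn f₀ [σ' x₀, X]] ∼ fn f₀ [subst σ' l', X]
    · rw [hr, subst_fn, subst_fn]
      simp only [List.map, subst_var]
      rw [subst_update_fresh hx2']
      have hτx : τ x₀ = Tm.fn f₀ [σ' x₀, X] := by simp [hτ]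
      rw [hτx]
      exact simE_symm (sim_assoc hf₀ (subst σ' r₀) (σ' x₀) X)

end StmtAux
namespace StmtAux
open Tm
variable {F : Type}

/-! ### the variable-overlap case -/

theorem var_case {Ac : Set F} {Re : TRS F} {a b A B N : Tm F} {q el er : List Nat}
    (hA : subtermAt a q = some A) (hB : replaceAt a q B = some b)
    (hNA : subtermAt A el = some N) (hNB : subtermAt B er = some N)
    (hsim : ∀ N' A' B', replaceAt A el N' = some A' → replaceAt B er N' = some B' →
      simAC Ac A' B')
    {e₀ : List Nat} {w : Tm F} {l' r' : Tm F} {σ' : Nat → Tm F}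
    (hmem : (l', r') ∈ Re)
    (hw : subtermAt b (q ++ (er ++ e₀)) = some w)
    (hmatch : simAC Ac w (subst σ' l'))
    {c : Tm F} (hc : replaceAt b (q ++ (er ++ e₀)) (subst σ' r') = some c) :
    ∃ c', RewPS Ac Re a c' ∧ simAC Ac c' c := by
  have hbq : subtermAt b q = some B := subtermAt_replaceAt q hB
  -- locate w inside N
  have hNw : subtermAt N e₀ = some w := by
    rw [subtermAt_append, hbq, Option.bind_some, subtermAt_append, hNB,
      Option.bind_some] at hw
    exact hw
  obtain ⟨N', hN'⟩ := replaceAt_exists hNw (subst σ' r')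
  obtain ⟨A', hA'⟩ := replaceAt_exists hNA N'
  obtain ⟨B', hB'⟩ := replaceAt_exists hNB N'
  -- the rewrite from a
  have haw : subtermAt a (q ++ (el ++ e₀)) = some w := by
    rw [subtermAt_append, hA, Option.bind_some, subtermAt_append, hNA, Option.bind_some]
    exact hNw
  obtain ⟨c', hc'⟩ := replaceAt_exists haw (subst σ' r')
  have hc'A : replaceAt a q A' = some c' := by
    rw [replaceAt_append q (el ++ e₀) hA, replaceAt_append el e₀ hNA, hN',
      Option.bind_some, hA', Option.bind_some] at hc'
    exact hc'
  have hcB : replaceAt a q B' = some c := by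
    rw [replaceAt_append q (er ++ e₀) hbq, replaceAt_append er e₀ hNB, hN',
      Option.bind_some, hB', Option.bind_some, replaceAt_replaceAt q hB] at hc
    exact hc
  refine ⟨c', ⟨q ++ (el ++ e₀), l', r', σ', w, hmem, haw, hmatch, hc'⟩, ?_⟩
  exact simE_replace (hsim N' A' B' hA' hB') hc'A hcB

/-! ### the critical-overlap case -/

theorem overlap_case {Ac : Set F} {R : TRS F} (hTRS : IsTRS R) {a b A t0 t1 : Tm F}
    {q : List Nat} {f : F} (hf : f ∈ Ac)
    (hA : subtermAt a q = some A) (hB : replaceAt a q (Tm.fn f [t0, t1]) = some b)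
    (hsimAB : simAC Ac A (.fn f [t0, t1]))
    {i : Nat} {w l' r' : Tm F} {σ' : Nat → Tm F}
    (hmem : (l', r') ∈ ACExt Ac R)
    (hw : subtermAt b (q ++ [i]) = some w)
    (hwsh : shape w = Sum.inr (f, 2))
    (hmatch : simAC Ac w (subst σ' l'))
    {c : Tm F} (hc : replaceAt b (q ++ [i]) (subst σ' r') = some c) :
    ∃ c', RewPS Ac (ACExt Ac R) a c' ∧ simAC Ac c' c := by
  have hbq : subtermAt b q = some (Tm.fn f [t0, t1]) := subtermAt_replaceAt q hB
  -- shape of the rule's left-hand side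
  have hlsh : shape (subst σ' l') = Sum.inr (f, 2) := hwsh ▸ (shape_sim hmatch).symm
  obtain ⟨l1, l2, hl'⟩ := lhs_shape hTRS hmem hlsh
  -- identify w and the sibling S
  rw [subtermAt_append, hbq, Option.bind_some] at hw
  rw [replaceAt_append q [i] hbq] at hc
  simp only [replaceAt_replaceAt q hB] at hc
  match i, hw, hc with
  | 0, hw, hc =>
    rw [subtermAt_fn2_zero] at hw
    obtain rfl : t0 = w := by simpa using hw
    rw [replaceAt_fn2_zero, Option.bind_some] at hc
    obtain ⟨L, Rr, τ, hmem', hsimL, hsimR⟩ := ext_lemma hTRS hmem hf hl' σ' t1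
    obtain ⟨c', hc'⟩ := replaceAt_exists hA (subst τ Rr)
    refine ⟨c', ⟨q, L, Rr, τ, A, hmem', hA, ?_, hc'⟩, ?_⟩
    · exact simE_trans hsimAB (simE_trans (simE_fn2 f hmatch (simE_refl t1))
        (simE_symm hsimL))
    · exact simE_replace (simE_trans hsimR (simE_fn2 f (simE_refl _) (simE_refl t1)))
        hc' hc
  | 1, hw, hc =>
    rw [subtermAt_fn2_one] at hw
    obtain rfl : t1 = w := by simpa using hw
    rw [replaceAt_fn2_one, Option.bind_some] at hc
    obtain ⟨L, Rr, τ, hmem', hsimL, hsimR⟩ := ext_lemma hTRS hmem hf hl' σ' t0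
    obtain ⟨c', hc'⟩ := replaceAt_exists hA (subst τ Rr)
    refine ⟨c', ⟨q, L, Rr, τ, A, hmem', hA, ?_, hc'⟩, ?_⟩
    · exact simE_trans hsimAB (simE_trans (sim_comm hf t0 t1) (simE_trans
        (simE_fn2 f hmatch (simE_refl t0)) (simE_symm hsimL)))
    · exact simE_replace (simE_trans hsimR (sim_comm hf (subst σ' r') t0)) hc' hc
  | (n+2), hw, hc =>
    rw [subtermAt_fn_cons] at hw
    simp at hw

end StmtAux
namespace StmtAux
open Tm
variable {F : Type}

@[simp] theorem subtermAt_fn2_cons0 (f : F) (a b : Tm F) (p : List Nat) :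
    subtermAt (Tm.fn f [a, b]) (0 :: p) = subtermAt a p := by
  rw [subtermAt_fn_cons]; simp

@[simp] theorem subtermAt_fn2_cons1 (f : F) (a b : Tm F) (p : List Nat) :
    subtermAt (Tm.fn f [a, b]) (1 :: p) = subtermAt b p := by
  rw [subtermAt_fn_cons]; simp

@[simp] theorem subtermAt_fn2_ge2 (f : F) (a b : Tm F) (n : Nat) (p : List Nat) :
    subtermAt (Tm.fn f [a, b]) ((n + 2) :: p) = none := by
  rw [subtermAt_fn_cons]
  have : ([a, b] : List (Tm F))[n + 2]? = none := by
    apply List.getElem?_eq_none; simp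
  rw [this]; rfl

@[simp] theorem replaceAt_fn2_cons0 (f : F) (a b : Tm F) (p : List Nat) (x : Tm F) :
    replaceAt (Tm.fn f [a, b]) (0 :: p) x =
      (replaceAt a p x).map (fun a' => Tm.fn f [a', b]) := by
  rw [replaceAt_fn_cons]
  simp only [List.getElem?_cons_zero, Option.bind_some]
  cases replaceAt a p x <;> simp [List.set]

@[simp] theorem replaceAt_fn2_cons1 (f : F) (a b : Tm F) (p : List Nat) (x : Tm F) :
    replaceAt (Tm.fn f [a, b]) (1 :: p) x =
      (replaceAt b p x).map (fun b' => Tm.fn f [a, b']) := by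
  rw [replaceAt_fn_cons]
  simp only [List.getElem?_cons_succ, List.getElem?_cons_zero, Option.bind_some]
  cases replaceAt b p x <;> simp [List.set]

/-! ### PS redex strictly below the AC step -/

section Below

variable {Ac : Set F} {R : TRS F} {f : F} {a b : Tm F} {q : List Nat}
  {w l' r' c : Tm F} {σ' : Nat → Tm F}

theorem below_assoc_fwd (hTRS : IsTRS R) (hf : f ∈ Ac) {X Y Z : Tm F}
    (h1 : subtermAt a q = some (.fn f [.fn f [X, Y], Z]))
    (h2 : replaceAt a q (.fn f [X, .fn f [Y, Z]]) = some b)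
    {e : List Nat} (hmem : (l', r') ∈ ACExt Ac R)
    (hw : subtermAt b (q ++ e) = some w) (hmatch : simAC Ac w (subst σ' l'))
    (hc : replaceAt b (q ++ e) (subst σ' r') = some c) (hne : e ≠ []) :
    ∃ c', RewPS Ac (ACExt Ac R) a c' ∧ simAC Ac c' c := by
  have hbq : subtermAt b q = some (.fn f [X, .fn f [Y, Z]]) := subtermAt_replaceAt q h2
  match e, hw, hc with
  | [], _, _ => exact absurd rfl hne
  | 0 :: e₀, hw, hc =>
    refine var_case h1 h2 (show subtermAt (Tm.fn f [Tm.fn f [X, Y], Z]) [0, 0] = some X by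
        simp)
      (show subtermAt (Tm.fn f [X, Tm.fn f [Y, Z]]) [0] = some X by simp)
      (fun N' A' B' hA' hB' => by
        simp at hA' hB'
        subst hA'; subst hB'
        exact sim_assoc hf N' Y Z) hmem hw hmatch hc
  | [1], hw, hc =>
    have hw' := hw
    rw [subtermAt_append, hbq, Option.bind_some] at hw'
    simp at hw'
    refine overlap_case hTRS hf h1 h2 (simE_of_rew (rew_assoc hf X Y Z)) hmem hw ?_
      hmatch hc
    rw [← hw']; rfl
  | 1 :: 0 :: e₁, hw, hc =>
    refine var_case h1 h2 (show subtermAt (Tm.fn f [Tm.fn f [X, Y], Z]) [0, 1] = some Y by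
        simp)
      (show subtermAt (Tm.fn f [X, Tm.fn f [Y, Z]]) [1, 0] = some Y by simp)
      (fun N' A' B' hA' hB' => by
        simp at hA' hB'
        subst hA'; subst hB'
        exact sim_assoc hf X N' Z) hmem hw hmatch hc
  | 1 :: 1 :: e₁, hw, hc =>
    refine var_case h1 h2 (show subtermAt (Tm.fn f [Tm.fn f [X, Y], Z]) [1] = some Z by
        simp)
      (show subtermAt (Tm.fn f [X, Tm.fn f [Y, Z]]) [1, 1] = some Z by simp)
      (fun N' A' B' hA' hB' => by
        simp at hA' hB'
        subst hA'; subst hB'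
        exact sim_assoc hf X Y N') hmem hw hmatch hc
  | 1 :: (n + 2) :: e₁, hw, hc =>
    rw [subtermAt_append, hbq, Option.bind_some] at hw
    simp at hw
  | (n + 2) :: e₀, hw, hc =>
    rw [subtermAt_append, hbq, Option.bind_some] at hw
    simp at hw

theorem below_assoc_bwd (hTRS : IsTRS R) (hf : f ∈ Ac) {X Y Z : Tm F}
    (h1 : subtermAt a q = some (.fn f [X, .fn f [Y, Z]]))
    (h2 : replaceAt a q (.fn f [.fn f [X, Y], Z]) = some b)
    {e : List Nat} (hmem : (l', r') ∈ ACExt Ac R)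
    (hw : subtermAt b (q ++ e) = some w) (hmatch : simAC Ac w (subst σ' l'))
    (hc : replaceAt b (q ++ e) (subst σ' r') = some c) (hne : e ≠ []) :
    ∃ c', RewPS Ac (ACExt Ac R) a c' ∧ simAC Ac c' c := by
  have hbq : subtermAt b q = some (.fn f [.fn f [X, Y], Z]) := subtermAt_replaceAt q h2
  match e, hw, hc with
  | [], _, _ => exact absurd rfl hne
  | [0], hw, hc =>
    have hw' := hw
    rw [subtermAt_append, hbq, Option.bind_some] at hw'
    simp at hw'
    refine overlap_case hTRS hf h1 h2 (simE_symm (simE_of_rew (rew_assoc hf X Y Z))) hmem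
      hw ?_ hmatch hc
    rw [← hw']; rfl
  | 0 :: 0 :: e₁, hw, hc =>
    refine var_case h1 h2 (show subtermAt (Tm.fn f [X, Tm.fn f [Y, Z]]) [0] = some X by
        simp)
      (show subtermAt (Tm.fn f [Tm.fn f [X, Y], Z]) [0, 0] = some X by simp)
      (fun N' A' B' hA' hB' => by
        simp at hA' hB'
        subst hA'; subst hB'
        exact simE_symm (sim_assoc hf N' Y Z)) hmem hw hmatch hc
  | 0 :: 1 :: e₁, hw, hc =>
    refine var_case h1 h2 (show subtermAt (Tm.fn f [X, Tm.fn f [Y, Z]]) [1, 0] = some Y by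
        simp)
      (show subtermAt (Tm.fn f [Tm.fn f [X, Y], Z]) [0, 1] = some Y by simp)
      (fun N' A' B' hA' hB' => by
        simp at hA' hB'
        subst hA'; subst hB'
        exact simE_symm (sim_assoc hf X N' Z)) hmem hw hmatch hc
  | 1 :: e₁, hw, hc =>
    refine var_case h1 h2 (show subtermAt (Tm.fn f [X, Tm.fn f [Y, Z]]) [1, 1] = some Z by
        simp)
      (show subtermAt (Tm.fn f [Tm.fn f [X, Y], Z]) [1] = some Z by simp)
      (fun N' A' B' hA' hB' => by
        simp at hA' hB'
        subst hA'; subst hB'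
        exact simE_symm (sim_assoc hf X Y N')) hmem hw hmatch hc
  | 0 :: (n + 2) :: e₁, hw, hc =>
    rw [subtermAt_append, hbq, Option.bind_some] at hw
    simp at hw
  | (n + 2) :: e₀, hw, hc =>
    rw [subtermAt_append, hbq, Option.bind_some] at hw
    simp at hw

theorem below_comm (hTRS : IsTRS R) (hf : f ∈ Ac) {X Y : Tm F}
    (h1 : subtermAt a q = some (.fn f [X, Y]))
    (h2 : replaceAt a q (.fn f [Y, X]) = some b)
    {e : List Nat} (hmem : (l', r') ∈ ACExt Ac R)
    (hw : subtermAt b (q ++ e) = some w) (hmatch : simAC Ac w (subst σ' l'))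
    (hc : replaceAt b (q ++ e) (subst σ' r') = some c) (hne : e ≠ []) :
    ∃ c', RewPS Ac (ACExt Ac R) a c' ∧ simAC Ac c' c := by
  have hbq : subtermAt b q = some (.fn f [Y, X]) := subtermAt_replaceAt q h2
  match e, hw, hc with
  | [], _, _ => exact absurd rfl hne
  | 0 :: e₀, hw, hc =>
    refine var_case h1 h2 (show subtermAt (Tm.fn f [X, Y]) [1] = some Y by simp)
      (show subtermAt (Tm.fn f [Y, X]) [0] = some Y by simp)
      (fun N' A' B' hA' hB' => by
        simp at hA' hB'
        subst hA'; subst hB'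
        exact sim_comm hf X N') hmem hw hmatch hc
  | 1 :: e₁, hw, hc =>
    refine var_case h1 h2 (show subtermAt (Tm.fn f [X, Y]) [0] = some X by simp)
      (show subtermAt (Tm.fn f [Y, X]) [1] = some X by simp)
      (fun N' A' B' hA' hB' => by
        simp at hA' hB'
        subst hA'; subst hB'
        exact sim_comm hf N' Y) hmem hw hmatch hc
  | (n + 2) :: e₀, hw, hc =>
    rw [subtermAt_append, hbq, Option.bind_some] at hw
    simp at hw

end Below

end StmtAux
namespace StmtAux
open Tm
variable {F : Type}

/-! ### one-step commutation -/

theorem comm_step {Ac : Set F} {R : TRS F} (hTRS : IsTRS R) {a b : Tm F}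
    (hstep : SStep Ac a b) {c : Tm F} (hPS : RewPS Ac (ACExt Ac R) b c) :
    ∃ c', RewPS Ac (ACExt Ac R) a c' ∧ simAC Ac c' c := by
  obtain ⟨q, l, r, σ, hor, h1, h2⟩ := hstep
  obtain ⟨p, l', r', σ', w, hmem, hw, hmatch, hc⟩ := hPS
  rcases pos_trichotomy p q with ⟨e, rfl⟩ | ⟨e, hne, rfl⟩ |
    ⟨c₀, i, j, p₀, q₀, hij, rfl, rfl⟩
  · -- AC step inside (or at) the redex position
    rw [subtermAt_append] at h1
    cases hap : subtermAt a p with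
    | none => rw [hap] at h1; simp at h1
    | some u =>
      rw [hap, Option.bind_some] at h1
      rw [replaceAt_append p e hap] at h2
      cases hue : replaceAt u e (subst σ r) with
      | none => rw [hue] at h2; simp at h2
      | some ub =>
        rw [hue, Option.bind_some] at h2
        have hbp : subtermAt b p = some ub := subtermAt_replaceAt p h2
        obtain rfl : ub = w := Option.some_inj.mp (hbp.symm.trans hw)
        have hsimu : simAC Ac u ub := SStep.sim ⟨e, l, r, σ, hor, h1, hue⟩
        have hrep : replaceAt a p (subst σ' r') = some c := by
          rw [← replaceAt_replaceAt p h2]; exact hc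
        exact ⟨c, ⟨p, l', r', σ', u, hmem, hap, simE_trans hsimu hmatch, hrep⟩,
          simE_refl c⟩
  · -- redex strictly below the AC step
    have hpat : ((l, r) ∈ ACax Ac ∧ True) ∨ ((r, l) ∈ ACax Ac ∧ True) := by
      rcases hor with h | h
      exacts [Or.inl ⟨h, trivial⟩, Or.inr ⟨h, trivial⟩]
    rcases hor with hmem' | hmem'
    · obtain ⟨f, hf, hp'⟩ := hmem'
      rcases hp' with hp' | hp'
      · have hl : l = Tm.fn f [Tm.fn f [Tm.var 0, Tm.var 1], Tm.var 2] :=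
          congrArg Prod.fst hp'
        have hr : r = Tm.fn f [Tm.var 0, Tm.fn f [Tm.var 1, Tm.var 2]] :=
          congrArg Prod.snd hp'
        rw [hl] at h1; rw [hr] at h2
        simp only [subst_fn, List.map, subst_var] at h1 h2
        exact below_assoc_fwd hTRS hf h1 h2 hmem hw hmatch hc hne
      · have hl : l = Tm.fn f [Tm.var 0, Tm.var 1] := congrArg Prod.fst hp'
        have hr : r = Tm.fn f [Tm.var 1, Tm.var 0] := congrArg Prod.snd hp'
        rw [hl] at h1; rw [hr] at h2
        simp only [subst_fn, List.map, subst_var] at h1 h2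
        exact below_comm hTRS hf h1 h2 hmem hw hmatch hc hne
    · obtain ⟨f, hf, hp'⟩ := hmem'
      rcases hp' with hp' | hp'
      · have hl : l = Tm.fn f [Tm.var 0, Tm.fn f [Tm.var 1, Tm.var 2]] :=
          congrArg Prod.snd hp'
        have hr : r = Tm.fn f [Tm.fn f [Tm.var 0, Tm.var 1], Tm.var 2] :=
          congrArg Prod.fst hp'
        rw [hl] at h1; rw [hr] at h2
        simp only [subst_fn, List.map, subst_var] at h1 h2
        exact below_assoc_bwd hTRS hf h1 h2 hmem hw hmatch hc hne
      · have hl : l = Tm.fn f [Tm.var 1, Tm.var 0] := congrArg Prod.snd hp'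
        have hr : r = Tm.fn f [Tm.var 0, Tm.var 1] := congrArg Prod.fst hp'
        rw [hl] at h1; rw [hr] at h2
        simp only [subst_fn, List.map, subst_var] at h1 h2
        exact below_comm hTRS hf h1 h2 hmem hw hmatch hc hne
  · -- disjoint positions
    have hsub : subtermAt b (c₀ ++ i :: p₀) = subtermAt a (c₀ ++ i :: p₀) :=
      disjoint_subtermAt (Ne.symm hij) h2
    have haw : subtermAt a (c₀ ++ i :: p₀) = some w := by rw [← hsub]; exact hw
    obtain ⟨c', hc'⟩ := replaceAt_exists haw (subst σ' r')
    have hcomm : replaceAt c' (c₀ ++ j :: q₀) (subst σ r) = some c :=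
      disjoint_replace_comm (Ne.symm hij) h2 hc hc'
    have hsubq : subtermAt c' (c₀ ++ j :: q₀) = subtermAt a (c₀ ++ j :: q₀) :=
      disjoint_subtermAt hij hc'
    refine ⟨c', ⟨c₀ ++ i :: p₀, l', r', σ', w, hmem, haw, hmatch, hc'⟩, ?_⟩
    exact SStep.sim ⟨c₀ ++ j :: q₀, l, r, σ, hor, by rw [hsubq]; exact h1, hcomm⟩

/-! ### pushing an AC conversion past Peterson–Stickel steps -/

theorem push_sim {Ac : Set F} {R : TRS F} (hTRS : IsTRS R) {a b : Tm F}
    (h : simAC Ac a b) :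
    ∀ c, RewPS Ac (ACExt Ac R) b c → ∃ c', RewPS Ac (ACExt Ac R) a c' ∧ simAC Ac c' c := by
  have both : (∀ c, RewPS Ac (ACExt Ac R) b c →
        ∃ c', RewPS Ac (ACExt Ac R) a c' ∧ simAC Ac c' c) ∧
      (∀ c, RewPS Ac (ACExt Ac R) a c →
        ∃ c', RewPS Ac (ACExt Ac R) b c' ∧ simAC Ac c' c) := by
    induction h with
    | rel x y hxy =>
      exact ⟨fun c hc => comm_step hTRS (SStep_of_rew hxy) hc,
        fun c hc => comm_step hTRS (SStep.symm (SStep_of_rew hxy)) hc⟩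
    | refl x =>
      exact ⟨fun c hc => ⟨c, hc, simE_refl c⟩, fun c hc => ⟨c, hc, simE_refl c⟩⟩
    | symm x y _ ih => exact ⟨ih.2, ih.1⟩
    | trans x y z _ _ ih1 ih2 =>
      constructor
      · intro c hc
        obtain ⟨c₁, h₁, s₁⟩ := ih2.1 c hc
        obtain ⟨c₂, h₂, s₂⟩ := ih1.1 c₁ h₁
        exact ⟨c₂, h₂, simE_trans s₂ s₁⟩
      · intro c hc
        obtain ⟨c₁, h₁, s₁⟩ := ih1.2 c hc
        obtain ⟨c₂, h₂, s₂⟩ := ih2.2 c₁ h₁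
        exact ⟨c₂, h₂, simE_trans s₂ s₁⟩
  exact both.1

/-! ### Peterson–Stickel steps are rewriting modulo -/

theorem PS_sub {Ac : Set F} {R : TRS F} {s t : Tm F}
    (h : RewPS Ac (ACExt Ac R) s t) : RewMod R (ACax Ac) s t := by
  obtain ⟨p, l', r', σ, w, hmem, hw, hmatch, hrep⟩ := h
  obtain ⟨s₁, hs₁⟩ := replaceAt_exists hw (subst σ l')
  have hsim : simAC Ac s s₁ := simE_replace hmatch (replaceAt_self p hw) hs₁
  have hs₁sub : subtermAt s₁ p = some (subst σ l') := subtermAt_replaceAt p hs₁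
  have hs₁rep : ∀ v, replaceAt s₁ p v = replaceAt s p v := replaceAt_replaceAt p hs₁
  rcases hmem with hR | ⟨f, hf, u, v, r₀, x, hR, hx1, hx2, heq⟩
  · exact ⟨s₁, t, hsim, ⟨p, l', r', σ, hR, hs₁sub, by rw [hs₁rep]; exact hrep⟩,
      simE_refl t⟩
  · have hl : l' = Tm.fn f [Tm.fn f [u, v], Tm.var x] := congrArg Prod.fst heq
    have hr : r' = Tm.fn f [r₀, Tm.var x] := congrArg Prod.snd heq
    refine ⟨s₁, t, hsim, ⟨p ++ [0], Tm.fn f [u, v], r₀, σ, hR, ?_, ?_⟩, simE_refl t⟩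
    · rw [subtermAt_append, hs₁sub, Option.bind_some, hl]
      simp only [subst_fn, List.map, subst_var]
      simp
    · rw [replaceAt_append p [0] hs₁sub, hl]
      simp only [subst_fn, List.map, subst_var]
      rw [replaceAt_fn2_cons0]
      simp only [replaceAt_nil, Option.map_some, Option.bind_some]
      rw [hs₁rep]
      rw [hr] at hrep
      simp only [subst_fn, List.map, subst_var] at hrep
      exact hrep

/-! ### many-step versions -/

theorem rtg_mod_to_ps {Ac : Set F} {R : TRS F} (hTRS : IsTRS R) {s u : Tm F}
    (h : Relation.ReflTransGen (RewMod R (ACax Ac)) s u) :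
    ∃ u', Relation.ReflTransGen (RewPS Ac (ACExt Ac R)) s u' ∧ simAC Ac u' u := by
  induction h with
  | refl => exact ⟨s, Relation.ReflTransGen.refl, simE_refl s⟩
  | tail hsu hstep ih =>
    obtain ⟨u', hptr, hsim⟩ := ih
    obtain ⟨x, y, hux, hxy, hyv⟩ := hstep
    have hxyPS : RewPS Ac (ACExt Ac R) x y := by
      obtain ⟨p, l, r, σ, hR, hsub, hrep⟩ := hxy
      exact ⟨p, l, r, σ, subst σ l, Or.inl hR, hsub, simE_refl _, hrep⟩
    obtain ⟨y', hy', hsimy⟩ := push_sim hTRS (simE_trans hsim hux) y hxyPS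
    exact ⟨y', hptr.tail hy', simE_trans hsimy hyv⟩

end StmtAux

open StmtAux

/-- The relations `→R/AC* · ∼AC` and `→R^e,AC* · ∼AC` coincide, so normal
forms modulo AC can be computed by Peterson–Stickel rewriting with the
extended system. -/
theorem stmt17 {F : Type} (Ac : Set F) (R : TRS F) (hTRS : IsTRS R) :
    ∀ s t,
      (∃ u, Relation.ReflTransGen (RewMod R (ACax Ac)) s u ∧ simAC Ac u t) ↔
      (∃ u, Relation.ReflTransGen (RewPS Ac (ACExt Ac R)) s u ∧ simAC Ac u t) := by
  intro s t
  constructor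
  · rintro ⟨u, h1, h2⟩
    obtain ⟨u', hp, hs⟩ := rtg_mod_to_ps hTRS h1
    exact ⟨u', hp, simE_trans hs h2⟩
  · rintro ⟨u, h1, h2⟩
    exact ⟨u, Relation.ReflTransGen.mono (fun a b h => PS_sub h) _ _ h1, h2⟩
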